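/- arXiv:0909.1184 — 2 statements merged into one kernel-verified Lean document; each statement's English description precedes it below -/
import Mathlib

section
/- Let L be a positive definite even lattice in (V,Q) and let p be a prime such that L is maximal at p. Let L^{♯,p} := L^# ∩ ℤ[1/p]·L be the lattice dualized only at p. Then {x ∈ L^{♯,p} : Q(x) ∈ ℤ} = L; in particular, for every n ∈ ℤ the finite sets {x ∈ L^{♯,p} : Q(x) = n} and {x ∈ L : Q(x) = n} coincide, i.e. θ(L^{♯,p})∣U⁰(p) = θ(L). -/
noncomputable section

open Complex UpperHalfPlane Matrix Finset Filter CongruenceSubgroup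
open scoped MatrixGroups ModularForm Real

namespace BN

/-! ### Lattices in rational quadratic spaces -/

variable {V : Type} [AddCommGroup V] [Module ℚ V]

/-- The bilinear form `(x,y) := Q(x+y) - Q(x) - Q(y)` associated to `Q`. -/
def bf (Q : QuadraticForm ℚ V) (x y : V) : ℚ := Q (x + y) - Q x - Q y

/-- `L` is a (full) `ℤ`-lattice in `V`: finitely generated and spanning `V` over `ℚ`. -/
def IsZLattice (L : Submodule ℤ V) : Prop :=
  L.FG ∧ Submodule.span ℚ (L : Set V) = ⊤

/-- `L` is an even lattice : `Q` takes integral values on `L`. -/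
def IsEvenL (Q : QuadraticForm ℚ V) (L : Submodule ℤ V) : Prop :=
  ∀ x ∈ L, ∃ n : ℤ, Q x = (n : ℚ)

/-- The dual lattice of `L` (taken inside the rational span of `L`). -/
def dualSet (Q : QuadraticForm ℚ V) (L : Submodule ℤ V) : Set V :=
  {x | x ∈ Submodule.span ℚ (L : Set V) ∧ ∀ ℓ ∈ L, ∃ n : ℤ, bf Q x ℓ = (n : ℚ)}

/-- `L` has rank `n` and the determinant of a Gram matrix of a `ℤ`-basis is `d`. -/
def HasGram (Q : QuadraticForm ℚ V) (L : Submodule ℤ V) (n : ℕ) (d : ℚ) : Prop :=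
  ∃ b : Module.Basis (Fin n) ℤ L, (Matrix.of fun i j => bf Q (b i : V) (b j : V)).det = d

/-- The even lattice `L` has exact level `N`: `N` is the smallest positive integer
such that `N·Q` is integral on the dual lattice. -/
def HasLevel (Q : QuadraticForm ℚ V) (L : Submodule ℤ V) (N : ℕ) : Prop :=
  0 < N ∧ (∀ x ∈ dualSet Q L, ∃ z : ℤ, (N : ℚ) * Q x = (z : ℚ)) ∧
    ∀ M : ℕ, 0 < M → (∀ x ∈ dualSet Q L, ∃ z : ℤ, (M : ℚ) * Q x = (z : ℚ)) → N ≤ M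

/-- `L` is a maximal even lattice: even, and admitting no proper even overlattice
 (inside the rational span of `L`). -/
def IsMaximalEvenL (Q : QuadraticForm ℚ V) (L : Submodule ℤ V) : Prop :=
  IsEvenL Q L ∧ ∀ L' : Submodule ℤ V, L'.FG → IsEvenL Q L' →
    (L' : Set V) ⊆ (Submodule.span ℚ (L : Set V) : Set V) → L ≤ L' → L' = L

/-- `L` is maximal at the prime `p`: even, and admitting no even overlattice `L'` with
`L'/L` a (finite) `p`-group. -/
def IsMaximalAtL (Q : QuadraticForm ℚ V) (L : Submodule ℤ V) (p : ℕ) : Prop :=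
  IsEvenL Q L ∧ ∀ L' : Submodule ℤ V, L'.FG → IsEvenL Q L' → L ≤ L' →
    (∀ x ∈ L', ∃ r : ℕ, ((p : ℤ) ^ r) • x ∈ L) → L' = L

/-- The theta series of the even lattice `L`. -/
def theta (Q : QuadraticForm ℚ V) (L : Submodule ℤ V) : ℍ → ℂ :=
  fun τ => ∑' x : L, Complex.exp (2 * Real.pi * Complex.I * ((Q x : ℚ) : ℂ) * (τ : ℂ))

/-- The theta series of the adjoint lattice `√N L^#`. -/
def thetaAdj (Q : QuadraticForm ℚ V) (L : Submodule ℤ V) (N : ℕ) : ℍ → ℂ :=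
  fun τ => ∑' x : dualSet Q L,
    Complex.exp (2 * Real.pi * Complex.I * (N : ℂ) * ((Q (x : V) : ℚ) : ℂ) * (τ : ℂ))

/-- `w` is a characteristic vector of `M` : `(w,x) ≡ (x,x) mod 2` for all `x ∈ M`. -/
def IsCharVec (Q : QuadraticForm ℚ V) (M : Submodule ℤ V) (w : V) : Prop :=
  w ∈ M ∧ ∀ x ∈ M, ∃ n : ℤ, bf Q w x - bf Q x x = 2 * (n : ℚ)

/-- `M` is an integral lattice. -/
def IsIntegralL (Q : QuadraticForm ℚ V) (M : Submodule ℤ V) : Prop :=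
  ∀ x ∈ M, ∀ y ∈ M, ∃ n : ℤ, bf Q x y = (n : ℚ)

/-- `M` is a unimodular lattice: integral and equal to its dual. -/
def IsUnimodularL (Q : QuadraticForm ℚ V) (M : Submodule ℤ V) : Prop :=
  IsIntegralL Q M ∧ dualSet Q M = (M : Set V)

/-- `M` is an odd lattice: some vector has odd norm. -/
def IsOddL (Q : QuadraticForm ℚ V) (M : Submodule ℤ V) : Prop :=
  ∃ x ∈ M, ¬ ∃ n : ℤ, bf Q x x = 2 * (n : ℚ)

/-! ### Operators on functions on the upper half-plane -/

lemma moeb_im_pos (γ : Matrix (Fin 2) (Fin 2) ℝ) (h : 0 < γ.det) (τ : ℍ) :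
    0 < ((((γ 0 0 : ℝ) : ℂ) * (τ : ℂ) + ((γ 0 1 : ℝ) : ℂ)) /
        (((γ 1 0 : ℝ) : ℂ) * (τ : ℂ) + ((γ 1 1 : ℝ) : ℂ))).im := by
  set a := γ 0 0
  set b := γ 0 1
  set c := γ 1 0
  set d := γ 1 1
  have hdet : 0 < a * d - b * c := by
    have := Matrix.det_fin_two γ
    rw [this] at h
    exact h
  have him : 0 < (τ : ℂ).im := τ.2
  have hw : ((c : ℂ) * (τ : ℂ) + (d : ℂ)) ≠ 0 := by
    intro h0
    have h2 : ((c : ℂ) * (τ : ℂ) + (d : ℂ)).re = 0 := by rw [h0]; simp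
    have h1 : ((c : ℂ) * (τ : ℂ) + (d : ℂ)).im = 0 := by rw [h0]; simp
    simp [Complex.add_im, Complex.mul_im] at h1
    rcases h1 with hc | htau
    · have hd0 : d = 0 := by
        have hre : ((c : ℂ) * (τ : ℂ) + (d : ℂ)).re = c * (τ : ℂ).re + d := by
          simp [Complex.add_re, Complex.mul_re]
        rw [hre, hc] at h2
        linarith
      rw [hc, hd0] at hdet
      nlinarith
    · have htau' : (τ : ℂ).im = 0 := by simpa [UpperHalfPlane.coe_im] using htau
      linarith
  have hns : 0 < Complex.normSq ((c : ℂ) * (τ : ℂ) + (d : ℂ)) := Complex.normSq_pos.mpr hw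
  rw [Complex.div_im]
  have h1 : (((a : ℂ)) * (τ : ℂ) + (b : ℂ)).im = a * (τ : ℂ).im := by
    simp [Complex.add_im, Complex.mul_im]
  have h2 : (((a : ℂ)) * (τ : ℂ) + (b : ℂ)).re = a * (τ : ℂ).re + b := by
    simp [Complex.add_re, Complex.mul_re]
  have h3 : (((c : ℂ)) * (τ : ℂ) + (d : ℂ)).im = c * (τ : ℂ).im := by
    simp [Complex.add_im, Complex.mul_im]
  have h4 : (((c : ℂ)) * (τ : ℂ) + (d : ℂ)).re = c * (τ : ℂ).re + d := by
    simp [Complex.add_re, Complex.mul_re]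
  rw [h1, h2, h3, h4, div_sub_div_same, lt_div_iff₀ hns]
  nlinarith

/-- The Petersson slash operator `f ∣_k γ`, normalized (as in the paper) by
`(f∣_k γ)(τ) = det(γ)^{k/2} (cτ+d)^{-k} f(γτ)` (defined to be `0` if `det γ ≤ 0`). -/
def pslash (k : ℤ) (γ : Matrix (Fin 2) (Fin 2) ℝ) (f : ℍ → ℂ) : ℍ → ℂ :=
  fun τ =>
    if h : 0 < γ.det then
      ((γ.det ^ ((k : ℝ) / 2) : ℝ) : ℂ) *
        (((γ 1 0 : ℝ) : ℂ) * (τ : ℂ) + ((γ 1 1 : ℝ) : ℂ)) ^ (-k) *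
        f ⟨_, moeb_im_pos γ h τ⟩
    else 0

/-- The operator `U⁰(p)`: `(g∣U⁰(p))(τ) = (1/p)·Σ_{j<p} g(τ+j)`. -/
def U0op (p : ℕ) (g : ℍ → ℂ) : ℍ → ℂ :=
  fun τ => (p : ℂ)⁻¹ * ∑ j ∈ Finset.range p,
    g ⟨(τ : ℂ) + (j : ℕ), by simpa using τ.2⟩

/-- The operator `U(p)`: `(f∣U(p))(τ) = (1/p)·Σ_{j<p} f((τ+j)/p)`. -/
def Uop (p : ℕ) (f : ℍ → ℂ) : ℍ → ℂ :=
  fun τ =>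
    if hp : 0 < p then
      (p : ℂ)⁻¹ * ∑ j ∈ Finset.range p,
        f ⟨((τ : ℂ) + (j : ℕ)) / (p : ℕ), by
          rw [Complex.div_natCast_im]
          have him : (((τ : ℂ) + (j : ℕ)).im) = (τ : ℂ).im := by simp
          rw [him]
          exact div_pos τ.2 (by exact_mod_cast hp)⟩
    else 0

/-- The real matrix attached to an integral matrix `ω ∈ SL₂(ℤ)`. -/
def matR (ω : Matrix.SpecialLinearGroup (Fin 2) ℤ) : Matrix (Fin 2) (Fin 2) ℝ :=
  ((ω : Matrix (Fin 2) (Fin 2) ℤ)).map (Int.cast : ℤ → ℝ)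

/-- The Atkin-Lehner matrix `W_p^N = ω_p^N · [[p,0],[0,1]]`. -/
def Wmat (ω : Matrix.SpecialLinearGroup (Fin 2) ℤ) (p : ℕ) : Matrix (Fin 2) (Fin 2) ℝ :=
  matR ω * !![(p : ℝ), 0; 0, 1]

/-- The standard Fricke/Atkin-Lehner matrix `[[0,-1],[p,0]]` for prime level `p`. -/
def WmatP (p : ℕ) : Matrix (Fin 2) (Fin 2) ℝ := !![0, -1; (p : ℝ), 0]

/-- `ω ≡ [[0,-1],[1,0]] mod p` and `ω ≡ 1₂ mod q`. -/
def CongrCond (ω : Matrix.SpecialLinearGroup (Fin 2) ℤ) (p q : ℕ) : Prop :=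
  (ω 0 0) ≡ 0 [ZMOD (p : ℤ)] ∧ (ω 0 1) ≡ -1 [ZMOD (p : ℤ)] ∧
  (ω 1 0) ≡ 1 [ZMOD (p : ℤ)] ∧ (ω 1 1) ≡ 0 [ZMOD (p : ℤ)] ∧
  (ω 0 0) ≡ 1 [ZMOD (q : ℤ)] ∧ (ω 0 1) ≡ 0 [ZMOD (q : ℤ)] ∧
  (ω 1 0) ≡ 0 [ZMOD (q : ℤ)] ∧ (ω 1 1) ≡ 1 [ZMOD (q : ℤ)]

/-- The constant `p^{1 - k/2}` (as a complex number). -/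
def Ck (p : ℕ) (k : ℤ) : ℂ := (((p : ℝ) ^ ((1 : ℝ) - (k : ℝ) / 2) : ℝ) : ℂ)

/-- Membership in `M_k(N)^*`: `f∣W_p^N + p^{1-k/2} f∣U(p) = 0` for all primes `p ∣ N`
(for every admissible choice of `ω_p^N`). -/
def MemMstar (N : ℕ) (k : ℤ) (f : ℍ → ℂ) : Prop :=
  ∀ p : ℕ, p.Prime → p ∣ N → ∀ ω : Matrix.SpecialLinearGroup (Fin 2) ℤ,
    CongrCond ω p (N / p) →
      ∀ τ, pslash k (Wmat ω p) f τ + Ck p k * Uop p f τ = 0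

/-- Membership in `M_k(N)_*`: `f + p^{1-k/2} (f∣W_p^N)∣U(p) = 0` for all primes `p ∣ N`. -/
def MemMlow (N : ℕ) (k : ℤ) (f : ℍ → ℂ) : Prop :=
  ∀ p : ℕ, p.Prime → p ∣ N → ∀ ω : Matrix.SpecialLinearGroup (Fin 2) ℤ,
    CongrCond ω p (N / p) →
      ∀ τ, f τ + Ck p k * Uop p (pslash k (Wmat ω p) f) τ = 0

/-- Membership in `M_k(p)^*` for a prime level `p`, with `W = [[0,-1],[p,0]]`. -/
def MemMstarP (p : ℕ) (k : ℤ) (f : ℍ → ℂ) : Prop :=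
  ∀ τ, pslash k (WmatP p) f τ + Ck p k * Uop p f τ = 0

/-- Membership in `M_k(p)_*` for a prime level `p`, with `W = [[0,-1],[p,0]]`. -/
def MemMlowP (p : ℕ) (k : ℤ) (f : ℍ → ℂ) : Prop :=
  ∀ τ, f τ + Ck p k * Uop p (pslash k (WmatP p) f) τ = 0

lemma pslash_add (k : ℤ) (γ : Matrix (Fin 2) (Fin 2) ℝ) (f g : ℍ → ℂ) :
    pslash k γ (f + g) = pslash k γ f + pslash k γ g := by
  funext τ
  simp only [pslash, Pi.add_apply]
  split
  · ring
  · simp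

lemma pslash_smul (k : ℤ) (γ : Matrix (Fin 2) (Fin 2) ℝ) (c : ℂ) (f : ℍ → ℂ) :
    pslash k γ (c • f) = c • pslash k γ f := by
  funext τ
  simp only [pslash, Pi.smul_apply, smul_eq_mul]
  split
  · ring
  · simp

lemma pslash_zero (k : ℤ) (γ : Matrix (Fin 2) (Fin 2) ℝ) :
    pslash k γ (0 : ℍ → ℂ) = 0 := by
  funext τ
  simp only [pslash, Pi.zero_apply]
  split <;> simp

lemma Uop_add (p : ℕ) (f g : ℍ → ℂ) : Uop p (f + g) = Uop p f + Uop p g := by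
  funext τ
  simp only [Uop, Pi.add_apply]
  split
  · rw [Finset.sum_add_distrib]; ring
  · simp

lemma Uop_smul (p : ℕ) (c : ℂ) (f : ℍ → ℂ) : Uop p (c • f) = c • Uop p f := by
  funext τ
  simp only [Uop, Pi.smul_apply, smul_eq_mul]
  split
  · rw [← Finset.mul_sum]; ring
  · simp

lemma Uop_zero (p : ℕ) : Uop p (0 : ℍ → ℂ) = 0 := by
  funext τ
  simp only [Uop, Pi.zero_apply]
  split <;> simp

/-- The space `M_k(p)^*` (for a prime level `p`) as a subspace of the space of
modular forms of weight `k` for `Γ₀(p)`. -/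
def MstarSubP (p : ℕ) (k : ℤ) : Submodule ℂ (ModularForm (Gamma0 p) k) where
  carrier := {f | MemMstarP p k ⇑f}
  add_mem' := by
    intro f g hf hg
    intro τ
    rw [ModularForm.coe_add, pslash_add, Uop_add]
    have h1 := hf τ
    have h2 := hg τ
    simp only [Pi.add_apply]
    linear_combination h1 + h2
  zero_mem' := by
    intro τ
    rw [ModularForm.coe_zero, pslash_zero, Uop_zero]
    simp
  smul_mem' := by
    intro c f hf τ
    rw [ModularForm.coe_smul, pslash_smul, Uop_smul]
    simp only [Pi.smul_apply, smul_eq_mul]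
    linear_combination c * hf τ

/-- The space `M_k(N)^*` (for squarefree `N`) as a subspace of the space of
modular forms of weight `k` for `Γ₀(N)`. -/
def MstarSub (N : ℕ) (k : ℤ) : Submodule ℂ (ModularForm (Gamma0 N) k) where
  carrier := {f | MemMstar N k ⇑f}
  add_mem' := by
    intro f g hf hg
    intro p hp hpN ω hω τ
    rw [ModularForm.coe_add, pslash_add, Uop_add]
    have h1 := hf p hp hpN ω hω τ
    have h2 := hg p hp hpN ω hω τ
    simp only [Pi.add_apply]
    linear_combination h1 + h2
  zero_mem' := by
    intro p hp hpN ω hω τ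
    rw [ModularForm.coe_zero, pslash_zero, Uop_zero]
    simp
  smul_mem' := by
    intro c f hf p hp hpN ω hω τ
    rw [ModularForm.coe_smul, pslash_smul, Uop_smul]
    simp only [Pi.smul_apply, smul_eq_mul]
    linear_combination c * hf p hp hpN ω hω τ

/-- The subspace of cusp forms inside the space of modular forms. -/
def SSub (N : ℕ) (k : ℤ) : Submodule ℂ (ModularForm (Gamma0 N) k) where
  carrier := {f | ∃ g : CuspForm (Gamma0 N) k, ⇑g = ⇑f}
  add_mem' := by
    rintro f g ⟨a, ha⟩ ⟨b, hb⟩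
    exact ⟨a + b, by rw [CuspForm.coe_add, ModularForm.coe_add, ha, hb]⟩
  zero_mem' := ⟨0, by rw [CuspForm.coe_zero, ModularForm.coe_zero]⟩
  smul_mem' := by
    rintro c f ⟨a, ha⟩
    exact ⟨c • a, by rw [CuspForm.coe_smul, ModularForm.coe_smul, ha]⟩

/-- A maximal even lattice of level `p`, determinant `p²` and rank `2k` is dual extremal if
`min(√p L^#) ≥ 2 dim M_k(p)^*`, i.e. its adjoint theta series is the extremal modular form. -/
def DualExtremalP (Q : QuadraticForm ℚ V) (p kk : ℕ) (L : Submodule ℤ V) : Prop :=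
  IsZLattice L ∧ IsMaximalEvenL Q L ∧ HasLevel Q L p ∧ HasGram Q L (2 * kk) ((p : ℚ) ^ 2) ∧
    ∀ x ∈ dualSet Q L, x ≠ 0 →
      (2 * (Module.finrank ℂ (MstarSubP p (kk : ℤ))) : ℚ) ≤ (p : ℚ) * bf Q x x

/-- `D` is a fundamental discriminant (the discriminant of a quadratic number field, or `1`). -/
def IsFundamentalDiscriminant (D : ℤ) : Prop :=
  (D % 4 = 1 ∧ Squarefree D) ∨
    (D % 4 = 0 ∧ Squarefree (D / 4) ∧ ((D / 4) % 4 = 2 ∨ (D / 4) % 4 = 3))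


/-! If `x ∈ L^#` has integral norm, then `Q(ℓ + c x) = Q(ℓ) + c² Q(x) + c (x, ℓ)` is integral
for all `ℓ ∈ L`, so `L + ℤx` is again even; when moreover `p^r x ∈ L`, the quotient `(L + ℤx)/L`
is a `p`-group, and maximality at `p` forces `x ∈ L`. Conversely an even lattice is integral,
hence lies in its dual. -/

theorem Submodule.smul_mem_of_mem_sup_span_singleton {R M : Type*} [CommSemiring R]
    [AddCommMonoid M] [Module R M] {L : Submodule R M} {a : R} {x y : M} (hx : a • x ∈ L)
    (hy : y ∈ L ⊔ Submodule.span R {x}) : a • y ∈ L := by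
  obtain ⟨ℓ, hℓ, z, hz, rfl⟩ := Submodule.mem_sup.mp hy
  obtain ⟨c, rfl⟩ := Submodule.mem_span_singleton.mp hz
  rw [smul_add, smul_comm]
  exact L.add_mem (L.smul_mem a hℓ) (L.smul_mem c hx)

theorem IsEvenL.isIntegralL {Q : QuadraticForm ℚ V} {L : Submodule ℤ V} (hL : IsEvenL Q L) :
    IsIntegralL Q L := by
  intro x hx y hy
  obtain ⟨a, ha⟩ := hL (x + y) (L.add_mem hx hy)
  obtain ⟨b, hb⟩ := hL x hx
  obtain ⟨c, hc⟩ := hL y hy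
  exact ⟨a - b - c, by simp [bf, ha, hb, hc]⟩

theorem IsIntegralL.subset_dualSet {Q : QuadraticForm ℚ V} {L : Submodule ℤ V}
    (hL : IsIntegralL Q L) : (L : Set V) ⊆ dualSet Q L :=
  fun x hx => ⟨Submodule.subset_span hx, fun ℓ hℓ => hL x hx ℓ hℓ⟩

theorem map_add_zsmul (Q : QuadraticForm ℚ V) (ℓ x : V) (c : ℤ) :
    Q (ℓ + c • x) = Q ℓ + c * c * Q x + c * bf Q x ℓ := by
  rw [QuadraticMap.map_add Q, QuadraticMap.map_smul_of_tower, ← Int.cast_smul_eq_zsmul ℚ c x,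
    QuadraticMap.polar_smul_right, QuadraticMap.polar_comm]
  simp only [bf, QuadraticMap.polar, smul_eq_mul, zsmul_eq_mul, Int.cast_mul]

theorem IsEvenL.sup_span_singleton {Q : QuadraticForm ℚ V} {L : Submodule ℤ V} {x : V}
    (hL : IsEvenL Q L) (hxL : ∀ ℓ ∈ L, ∃ n : ℤ, bf Q x ℓ = n) (hx : ∃ n : ℤ, Q x = n) :
    IsEvenL Q (L ⊔ Submodule.span ℤ {x}) := by
  intro y hy
  obtain ⟨ℓ, hℓ, z, hz, rfl⟩ := Submodule.mem_sup.mp hy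
  obtain ⟨c, rfl⟩ := Submodule.mem_span_singleton.mp hz
  obtain ⟨a, ha⟩ := hL ℓ hℓ
  obtain ⟨b, hb⟩ := hxL ℓ hℓ
  obtain ⟨n, hn⟩ := hx
  exact ⟨a + c * c * n + c * b, by rw [map_add_zsmul, ha, hb, hn]; push_cast; ring⟩

theorem IsMaximalAtL.mem_of_pow_smul_mem {Q : QuadraticForm ℚ V} {L : Submodule ℤ V} {p r : ℕ}
    {x : V} (hmax : IsMaximalAtL Q L p) (hfg : L.FG) (hxL : ∀ ℓ ∈ L, ∃ n : ℤ, bf Q x ℓ = n)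
    (hr : ((p : ℤ) ^ r) • x ∈ L) (hx : ∃ n : ℤ, Q x = n) : x ∈ L := by
  have hsup : L ⊔ Submodule.span ℤ {x} = L :=
    hmax.2 _ (hfg.sup (Submodule.fg_span_singleton x)) (hmax.1.sup_span_singleton hxL hx)
      le_sup_left fun _ hy => ⟨r, Submodule.smul_mem_of_mem_sup_span_singleton hr hy⟩
  exact hsup ▸ Submodule.mem_sup_right (Submodule.mem_span_singleton_self x)

theorem maximal_at_p_dual_at_p_general
    {V : Type} [AddCommGroup V] [Module ℚ V]
    (Q : QuadraticForm ℚ V)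
    (L : Submodule ℤ V) (hL : IsZLattice L)
    (p : ℕ) (hmax : IsMaximalAtL Q L p) :
    {x : V | x ∈ dualSet Q L ∧ (∃ r : ℕ, ((p : ℤ) ^ r) • x ∈ L) ∧ ∃ n : ℤ, Q x = (n : ℚ)}
        = (L : Set V) ∧
      ∀ n : ℤ,
        {x : V | x ∈ dualSet Q L ∧ (∃ r : ℕ, ((p : ℤ) ^ r) • x ∈ L) ∧ Q x = (n : ℚ)}
          = {x : V | x ∈ L ∧ Q x = (n : ℚ)} := by
  have hint : {x : V | x ∈ dualSet Q L ∧ (∃ r : ℕ, ((p : ℤ) ^ r) • x ∈ L) ∧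
      ∃ n : ℤ, Q x = (n : ℚ)} = (L : Set V) := by
    refine Set.Subset.antisymm ?_ fun x hx =>
      ⟨hmax.1.isIntegralL.subset_dualSet hx, ⟨0, by simpa using hx⟩, hmax.1 x hx⟩
    rintro x ⟨⟨-, hxL⟩, ⟨r, hr⟩, hx⟩
    exact hmax.mem_of_pow_smul_mem hL.1 hxL hr hx
  refine ⟨hint, fun n => Set.ext fun x => ⟨?_, ?_⟩⟩
  · rintro ⟨hxd, hxp, hn⟩
    exact ⟨hint.subset ⟨hxd, hxp, n, hn⟩, hn⟩
  · rintro ⟨hx, hn⟩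
    obtain ⟨hxd, hxp, -⟩ := hint.superset hx
    exact ⟨hxd, hxp, hn⟩

/-- if `L` is maximal at `p`, the integral-norm vectors of the lattice
`L^{♯,p} = L^# ∩ ℤ[1/p]·L` dualized only at `p` are exactly the vectors of `L`;
in particular `θ(L^{♯,p})∣U⁰(p) = θ(L)` coefficientwise. -/
theorem maximal_at_p_dual_at_p
    {V : Type} [AddCommGroup V] [Module ℚ V] [FiniteDimensional ℚ V]
    (Q : QuadraticForm ℚ V) (hQ : Q.PosDef)
    (L : Submodule ℤ V) (hL : IsZLattice L)
    (p : ℕ) (hp : p.Prime) (hmax : IsMaximalAtL Q L p) :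
    {x : V | x ∈ dualSet Q L ∧ (∃ r : ℕ, ((p : ℤ) ^ r) • x ∈ L) ∧ ∃ n : ℤ, Q x = (n : ℚ)}
        = (L : Set V) ∧
      ∀ n : ℤ,
        {x : V | x ∈ dualSet Q L ∧ (∃ r : ℕ, ((p : ℤ) ^ r) • x ∈ L) ∧ Q x = (n : ℚ)}
          = {x : V | x ∈ L ∧ Q x = (n : ℚ)} :=
  maximal_at_p_dual_at_p_general Q L hL p hmax

end BN
end
end

section
/- Let N be squarefree, let k and ℓ be even nonnegative integers, let f ∈ M_k(N)_* and let g ∈ M_ℓ(1) be a modular form of level one. Then the pointwise product g·f belongs to M_{k+ℓ}(N)_*. Hence M(N)_* = ⊕_k M_k(N)_* is a module over the ring of modular forms of level one. -/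
noncomputable section

open Complex UpperHalfPlane Matrix Finset Filter CongruenceSubgroup
open scoped MatrixGroups ModularForm Real

theorem CongruenceSubgroup.Gamma0_one : Gamma0 1 = ⊤ :=
  eq_top_iff.2 fun _ _ => Gamma0_mem.2 (Subsingleton.elim _ _)

def ModularForm.ofLE {Γ Γ' : Subgroup (GL (Fin 2) ℝ)} {k : ℤ} (h : Γ' ≤ Γ)
    (f : ModularForm Γ k) : ModularForm Γ' k where
  toFun := f
  slash_action_eq' γ hγ := f.slash_action_eq' γ (h hγ)
  holo' := f.holo'
  bdd_at_cusps' hc := f.bdd_at_cusps' (hc.mono h)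

@[simp]
lemma ModularForm.coe_ofLE {Γ Γ' : Subgroup (GL (Fin 2) ℝ)} {k : ℤ} (h : Γ' ≤ Γ)
    (f : ModularForm Γ k) : ⇑(f.ofLE h) = f := rfl

lemma ModularForm.levelOne_apply_smul {k : ℤ} (f : ModularForm (Gamma0 1) k) (γ : SL(2, ℤ))
    (z : ℍ) : f (γ • z) = denom γ z ^ k * f z :=
  SlashInvariantForm.slash_action_eqn_SL'' f (Gamma0_one ▸ Subgroup.mem_top γ) z

lemma ModularForm.levelOne_apply_intCast_vadd {k : ℤ} (f : ModularForm (Gamma0 1) k) (n : ℤ)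
    (z : ℍ) : f ((n : ℝ) +ᵥ z) = f z := by
  rw [← modular_T_zpow_smul, f.levelOne_apply_smul, ModularGroup.denom_apply,
    ModularGroup.coe_T_zpow]
  simp

namespace BN

lemma linear_ne_zero_of_det_pos {γ : Matrix (Fin 2) (Fin 2) ℝ} (h : 0 < γ.det) (τ : ℍ) :
    ((γ 1 0 : ℝ) : ℂ) * τ + ((γ 1 1 : ℝ) : ℂ) ≠ 0 :=
  linear_ne_zero (cd := ![γ 1 0, γ 1 1]) τ fun hcd => by
    have h0 : γ 1 0 = 0 := congr_fun hcd 0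
    have h1 : γ 1 1 = 0 := congr_fun hcd 1
    simp [Matrix.det_fin_two, h0, h1] at h

lemma pslash_mul_apply (k l : ℤ) (γ : Matrix (Fin 2) (Fin 2) ℝ) (F G : ℍ → ℂ) (τ : ℍ) :
    pslash (k + l) γ (F * G) τ = pslash k γ F τ * pslash l γ G τ := by
  simp only [pslash, Pi.mul_apply]
  split_ifs with h
  · have hdet : γ.det ^ (((k + l : ℤ) : ℝ) / 2) =
        γ.det ^ ((k : ℝ) / 2) * γ.det ^ ((l : ℝ) / 2) := by
      rw [← Real.rpow_add h]; push_cast; ring_nf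
    rw [hdet, neg_add, zpow_add₀ (linear_ne_zero_of_det_pos h τ)]
    push_cast
    ring
  · simp

lemma Wmat_eq (ω : SL(2, ℤ)) (p : ℕ) :
    Wmat ω p = !![(ω 0 0 : ℝ) * p, ω 0 1; (ω 1 0 : ℝ) * p, ω 1 1] := by
  ext i j
  fin_cases i <;> fin_cases j <;> simp [Wmat, matR, Matrix.mul_apply, Fin.sum_univ_two]

lemma Wmat_det (ω : SL(2, ℤ)) (p : ℕ) : (Wmat ω p).det = p := by
  have h : ((ω 0 0 * ω 1 1 - ω 0 1 * ω 1 0 : ℤ) : ℝ) = 1 := by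
    rw [← Matrix.det_fin_two, ω.det_coe, Int.cast_one]
  rw [Wmat_eq, Matrix.det_fin_two_of]
  push_cast at h
  linear_combination (p : ℝ) * h

lemma pslash_Wmat_apply (k : ℤ) (ω : SL(2, ℤ)) {p : ℕ} (hp : 0 < p) (F : ℍ → ℂ) {z w : ℍ}
    (hw : (w : ℂ) = p * z) :
    pslash k (Wmat ω p) F z =
      (((p : ℝ) ^ ((k : ℝ) / 2) : ℝ) : ℂ) * denom ω w ^ (-k) * F (ω • w) := by
  have hdet : 0 < (Wmat ω p).det := by rw [Wmat_det]; exact_mod_cast hp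
  have hpt : (⟨_, moeb_im_pos _ hdet z⟩ : ℍ) = ω • w := by
    ext
    rw [coe_specialLinearGroup_apply, hw]
    simp [Wmat_eq, mul_assoc]
  have hden : ((Wmat ω p 1 0 : ℝ) : ℂ) * z + ((Wmat ω p 1 1 : ℝ) : ℂ) = denom ω w := by
    rw [ModularGroup.denom_apply, hw]
    simp [Wmat_eq]
    ring
  rw [pslash, dif_pos hdet, hpt, hden, Wmat_det]

lemma pslash_Wmat_levelOne_apply {l : ℤ} (g : ModularForm (Gamma0 1) l) (ω : SL(2, ℤ)) {p : ℕ}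
    (hp : 0 < p) {z w : ℍ} (hw : (w : ℂ) = p * z) :
    pslash l (Wmat ω p) g z = (((p : ℝ) ^ ((l : ℝ) / 2) : ℝ) : ℂ) * g w := by
  rw [pslash_Wmat_apply l ω hp g hw, g.levelOne_apply_smul, ← mul_assoc, mul_assoc _ (_ ^ (-l)),
    ← zpow_add₀ (denom_ne_zero _ _), neg_add_cancel, zpow_zero, mul_one]

lemma Uop_mul_apply_of_eq_const {p : ℕ} (hp : 0 < p) (F H : ℍ → ℂ) (c : ℂ) (τ : ℍ)
    (hH : ∀ j : ℕ, ∀ z : ℍ, (z : ℂ) = (τ + j) / p → H z = c) :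
    Uop p (F * H) τ = Uop p F τ * c := by
  simp only [Uop, dif_pos hp, Pi.mul_apply, mul_assoc, Finset.sum_mul]
  exact congrArg _ (Finset.sum_congr rfl fun j _ => by rw [hH j _ rfl])

lemma Ck_add_mul_rpow {p : ℕ} (hp : 0 < p) (k l : ℤ) :
    Ck p (k + l) * (((p : ℝ) ^ ((l : ℝ) / 2) : ℝ) : ℂ) = Ck p k := by
  rw [Ck, Ck, ← Complex.ofReal_mul, ← Real.rpow_add (by exact_mod_cast hp)]
  push_cast
  ring_nf

theorem Mlow_module_over_level_one_general
    (N : ℕ) (k l : ℕ)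
    (f : ModularForm (Gamma0 N) (k : ℤ)) (hf : MemMlow N (k : ℤ) ⇑f)
    (g : ModularForm (Gamma0 1) (l : ℤ)) :
    ∃ h : ModularForm (Gamma0 N) ((k : ℤ) + (l : ℤ)),
      (∀ τ : ℍ, h τ = g τ * f τ) ∧ MemMlow N ((k : ℤ) + (l : ℤ)) ⇑h := by
  have hle : ((Gamma0 N : Subgroup SL(2, ℤ)) : Subgroup (GL (Fin 2) ℝ)) ≤
      (Gamma0 1 : Subgroup SL(2, ℤ)) :=
    Subgroup.map_mono (Gamma0_one ▸ le_top)
  refine ⟨f.mul (g.ofLE hle), fun τ => mul_comm _ _, fun p hp hpN ω hω τ => ?_⟩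
  have hU : Uop p (pslash (k + l) (Wmat ω p) ⇑(f.mul (g.ofLE hle))) τ =
      Uop p (pslash k (Wmat ω p) f) τ * ((((p : ℝ) ^ (((l : ℤ) : ℝ) / 2) : ℝ) : ℂ) * g τ) := by
    rw [ModularForm.coe_mul, ModularForm.coe_ofLE, funext (pslash_mul_apply _ _ _ f g)]
    refine Uop_mul_apply_of_eq_const hp.pos _ _ _ τ fun j z hz => ?_
    have hw : ((((j : ℤ) : ℝ) +ᵥ τ : ℍ) : ℂ) = p * z := by
      rw [coe_vadd, hz, mul_div_cancel₀ _ (by exact_mod_cast hp.ne_zero)]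
      push_cast
      ring
    rw [pslash_Wmat_levelOne_apply g ω hp.pos hw, g.levelOne_apply_intCast_vadd]
  rw [hU, ModularForm.coe_mul, Pi.mul_apply, ModularForm.coe_ofLE]
  linear_combination g τ * hf p hp hpN ω hω τ +
    Uop p (pslash k (Wmat ω p) f) τ * g τ * Ck_add_mul_rpow hp.pos k l

/-- multiplying an element of `M_k(N)_*` by a level-one modular form of
weight `ℓ` lands in `M_{k+ℓ}(N)_*`, so `M(N)_*` is a module over the ring of level-one
modular forms. -/
theorem Mlow_module_over_level_one
    (N : ℕ) (hNsf : Squarefree N) (hN0 : 0 < N)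
    (k l : ℕ) (hk : Even k) (hl : Even l)
    (f : ModularForm (Gamma0 N) (k : ℤ)) (hf : MemMlow N (k : ℤ) ⇑f)
    (g : ModularForm (Gamma0 1) (l : ℤ)) :
    ∃ h : ModularForm (Gamma0 N) ((k : ℤ) + (l : ℤ)),
      (∀ τ : ℍ, h τ = g τ * f τ) ∧ MemMlow N ((k : ℤ) + (l : ℤ)) ⇑h :=
  Mlow_module_over_level_one_general N k l f hf g

end BN
end
end
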